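/- arXiv:2005.08544 — 3 statements merged into one kernel-verified Lean document; each statement's English description precedes it below -/
import Mathlib

section
/- Let V and W be complex normed spaces equipped with seminorms L_V : V → [0,∞) and L_W : W → [0,∞). Let R : V → W and S : W → V be linear maps such that L_W(R v) ≤ L_V(v) for all v ∈ V and L_V(S w) ≤ L_W(w) for all w ∈ W, and suppose there is a constant γ' ≥ 0 such that ‖w − R(S w)‖ ≤ γ' · L_W(w) for all w ∈ W. For a seminorm L on a normed space E and continuous linear functionals φ, ψ on E, define d_L(φ, ψ) = sup { |φ(x) − ψ(x)| : x ∈ E, L(x) ≤ 1 } (a value in [0,∞]). Then for all continuous linear functionals φ, ψ on W with ‖φ‖ ≤ 1 and ‖ψ‖ ≤ 1 one has d_{L_V}(φ ∘ R, ψ ∘ R) ≤ d_{L_W}(φ, ψ) ≤ d_{L_V}(φ ∘ R, ψ ∘ R) + 2γ'. -/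
/-! Since `R` does not increase the seminorms, pulling back along `R` can only shrink the
supremum. Conversely, `S` maps the `L_W`-unit ball into the `L_V`-unit ball, and for `w` in the
former `‖w - R (S w)‖ ≤ γ'`, which moves each of the functionals `φ`, `ψ` of norm `≤ 1` by at
most `γ'`. -/

/-- Connes' distance function associated to a (Lipschitz) seminorm `L` on a normed space `E`:
`d_L(φ, ψ) = sup { |φ(x) − ψ(x)| : x ∈ E, L(x) ≤ 1 }`, valued in `[0,∞]`. -/
noncomputable def connesDist {E : Type*} [NormedAddCommGroup E]
    (L : E → ℝ) (φ ψ : E → ℂ) : ENNReal :=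
  ⨆ x ∈ {x : E | L x ≤ 1}, (‖φ x - ψ x‖₊ : ENNReal)

open scoped ENNReal

section ConnesDist

variable {E F : Type*} [NormedAddCommGroup E] [NormedAddCommGroup F]
  {L : E → ℝ} {L' : F → ℝ} {φ ψ : E → ℂ} {φ' ψ' : F → ℂ}

theorem le_connesDist {x : E} (hx : L x ≤ 1) :
    (‖φ x - ψ x‖₊ : ℝ≥0∞) ≤ connesDist L φ ψ :=
  le_iSup₂_of_le x hx le_rfl

theorem connesDist_comp_le {φ ψ : F → ℂ} (T : E → F) (hT : ∀ x, L' (T x) ≤ L x) :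
    connesDist L (fun x => φ (T x)) (fun x => ψ (T x)) ≤ connesDist L' φ ψ :=
  iSup₂_le fun x hx => le_connesDist ((hT x).trans hx)

theorem connesDist_le_add_of_forall_exists {c : ℝ} (hc : 0 ≤ c)
    (h : ∀ x, L x ≤ 1 → ∃ y, L' y ≤ 1 ∧ ‖φ x - ψ x‖ ≤ ‖φ' y - ψ' y‖ + c) :
    connesDist L φ ψ ≤ connesDist L' φ' ψ' + ENNReal.ofReal c := by
  refine iSup₂_le fun x hx => ?_
  obtain ⟨y, hy, hxy⟩ := h x hx
  calc (‖φ x - ψ x‖₊ : ℝ≥0∞)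
      = ENNReal.ofReal ‖φ x - ψ x‖ := by rw [← enorm_eq_nnnorm, ofReal_norm]
    _ ≤ ENNReal.ofReal ‖φ' y - ψ' y‖ + ENNReal.ofReal c := by
      rw [← ENNReal.ofReal_add (norm_nonneg _) hc]
      exact ENNReal.ofReal_le_ofReal hxy
    _ ≤ connesDist L' φ' ψ' + ENNReal.ofReal c := by
      rw [ofReal_norm, enorm_eq_nnnorm]
      gcongr
      exact le_connesDist hy

end ConnesDist

theorem ContinuousLinearMap.norm_sub_apply_le {𝕜 E F : Type*} [NontriviallyNormedField 𝕜]
    [SeminormedAddCommGroup E] [NormedSpace 𝕜 E] [SeminormedAddCommGroup F] [NormedSpace 𝕜 F]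
    (φ ψ : E →L[𝕜] F) (x y : E) :
    ‖φ x - ψ x‖ ≤ ‖φ y - ψ y‖ + (‖φ‖ + ‖ψ‖) * ‖x - y‖ := by
  have hsplit : φ x - ψ x = (φ - ψ) y + (φ - ψ) (x - y) := by
    simp only [sub_apply, map_sub]; abel
  calc ‖φ x - ψ x‖ ≤ ‖(φ - ψ) y‖ + ‖(φ - ψ) (x - y)‖ := hsplit ▸ norm_add_le _ _
    _ ≤ ‖φ y - ψ y‖ + ‖φ - ψ‖ * ‖x - y‖ := by
      rw [sub_apply]
      gcongr
      exact (φ - ψ).le_opNorm _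
    _ ≤ ‖φ y - ψ y‖ + (‖φ‖ + ‖ψ‖) * ‖x - y‖ := by
      gcongr
      exact norm_sub_le _ _

/-- Proposition 2.3(1): if `R, S` are Lipschitz-contractive linear maps with
`‖w − R(S w)‖ ≤ γ' L_W(w)`, then for norm-`≤ 1` functionals `φ, ψ` on `W` one has
`d_{L_V}(φ∘R, ψ∘R) ≤ d_{L_W}(φ, ψ) ≤ d_{L_V}(φ∘R, ψ∘R) + 2γ'`. -/
theorem connesDist_pullback_R {V W : Type*}
    [NormedAddCommGroup V] [NormedSpace ℂ V]
    [NormedAddCommGroup W] [NormedSpace ℂ W]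
    (LV : Seminorm ℂ V) (LW : Seminorm ℂ W)
    (R : V →ₗ[ℂ] W) (S : W →ₗ[ℂ] V)
    (hR : ∀ v : V, LW (R v) ≤ LV v)
    (hS : ∀ w : W, LV (S w) ≤ LW w)
    (γ' : ℝ) (hγ' : 0 ≤ γ')
    (happ : ∀ w : W, ‖w - R (S w)‖ ≤ γ' * LW w)
    (φ ψ : W →L[ℂ] ℂ) (hφ : ‖φ‖ ≤ 1) (hψ : ‖ψ‖ ≤ 1) :
    connesDist (fun v => LV v) (fun v => φ (R v)) (fun v => ψ (R v))
        ≤ connesDist (fun w => LW w) (fun w => φ w) (fun w => ψ w) ∧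
    connesDist (fun w => LW w) (fun w => φ w) (fun w => ψ w)
        ≤ connesDist (fun v => LV v) (fun v => φ (R v)) (fun v => ψ (R v))
          + ENNReal.ofReal (2 * γ') := by
  refine ⟨connesDist_comp_le R hR, connesDist_le_add_of_forall_exists (by positivity) ?_⟩
  intro w hw
  refine ⟨S w, (hS w).trans hw, ?_⟩
  have hdefect : ‖w - R (S w)‖ ≤ γ' := (happ w).trans (mul_le_of_le_one_right hγ' hw)
  calc ‖φ w - ψ w‖ ≤ ‖φ (R (S w)) - ψ (R (S w))‖ + (‖φ‖ + ‖ψ‖) * ‖w - R (S w)‖ :=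
        φ.norm_sub_apply_le ψ w (R (S w))
    _ ≤ ‖φ (R (S w)) - ψ (R (S w))‖ + 2 * γ' := by
        gcongr
        linarith
end

section
/- Let n ≥ 1 and let T be any n×n complex matrix, with ‖T‖ its operator norm on ℓ². Define S_n(T)(x) = (1/n) Σ_{j,l=0}^{n−1} T_{jl} e^{i(j−l)x} and let δ_n(T) be the matrix with entries (j−l)·T_{jl}. Then: (a) sup_x |S_n(T)(x)| ≤ ‖T‖; and (b) sup_x |(1/n) Σ_{j,l=0}^{n−1} (j−l) T_{jl} e^{i(j−l)x}| ≤ ‖δ_n(T)‖, i.e. the derivative of S_n(T) has sup-norm at most ‖δ_n(T)‖. -/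
open MeasureTheory

instance : Fact (0 < 2 * Real.pi) := ⟨by positivity⟩

/-- The operator norm of an `n×n` complex matrix acting on `ℓ²`. -/
noncomputable def l2OpNorm {n : ℕ} (M : Matrix (Fin n) (Fin n) ℂ) : ℝ :=
  ‖Matrix.toEuclideanCLM (𝕜 := ℂ) M‖

/-- The map `S_n`: `S_n(T)(x) = (1/n) Σ_{j,l} T_{jl} e^{i(j−l)x}`. -/
noncomputable def symbolMap (n : ℕ) (T : Matrix (Fin n) (Fin n) ℂ) :
    AddCircle (2 * Real.pi) → ℂ :=
  fun x => (1 / (n : ℂ)) *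
    ∑ j : Fin n, ∑ l : Fin n, T j l * fourier (((j : ℕ) : ℤ) - ((l : ℕ) : ℤ)) x

/-- The matrix `δ_n(T)` with entries `(j−l)·T_{jl}`, i.e. the commutator `[P_n D P_n, T]`. -/
noncomputable def deltaMat (n : ℕ) (T : Matrix (Fin n) (Fin n) ℂ) :
    Matrix (Fin n) (Fin n) ℂ :=
  Matrix.of fun j l => (((((j : ℕ) : ℤ) - ((l : ℕ) : ℤ)) : ℤ) : ℂ) * T j l

/-! With `v_x = (e^{-ilx})_l`, a vector of squared norm `n`, one has
`S_n(T)(x) = (1/n) ⟪v_x, T v_x⟫`, hence `|S_n(T)(x)| ≤ ‖T‖`. The second bound is the first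
applied to `δ_n(T)`, since `S_n(δ_n(T))` is the derivative of `S_n(T)` up to the factor `i`. -/

theorem ContinuousLinearMap.norm_inner_apply_self_le {𝕜 E : Type*} [RCLike 𝕜]
    [NormedAddCommGroup E] [InnerProductSpace 𝕜 E] (A : E →L[𝕜] E) (v : E) :
    ‖inner 𝕜 v (A v)‖ ≤ ‖A‖ * ‖v‖ ^ 2 :=
  calc ‖inner 𝕜 v (A v)‖ ≤ ‖v‖ * ‖A v‖ := norm_inner_le_norm _ _
    _ ≤ ‖v‖ * (‖A‖ * ‖v‖) := by gcongr; exact A.le_opNorm v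
    _ = ‖A‖ * ‖v‖ ^ 2 := by ring

noncomputable def fourierVec (n : ℕ) (x : AddCircle (2 * Real.pi)) : EuclideanSpace ℂ (Fin n) :=
  WithLp.toLp 2 fun l => fourier (-((l : ℕ) : ℤ)) x

theorem norm_fourierVec_sq (n : ℕ) (x : AddCircle (2 * Real.pi)) :
    ‖fourierVec n x‖ ^ 2 = n := by
  have norm_fourier (k : ℤ) : ‖fourier k x‖ = 1 := Circle.norm_coe _
  simp only [fourierVec, EuclideanSpace.norm_sq_eq, norm_fourier]
  simp

theorem symbolMap_eq_inner (n : ℕ) (T : Matrix (Fin n) (Fin n) ℂ) (x : AddCircle (2 * Real.pi)) :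
    symbolMap n T x =
      (1 / (n : ℂ)) * inner ℂ (fourierVec n x) (Matrix.toEuclideanCLM (𝕜 := ℂ) T (fourierVec n x)) := by
  simp only [symbolMap, fourierVec, Matrix.toEuclideanCLM_toLp, PiLp.inner_apply, RCLike.inner_apply',
    Matrix.mulVec, dotProduct, ← fourier_neg, neg_neg]
  refine congrArg _ (Finset.sum_congr rfl fun j _ => ?_)
  rw [Finset.mul_sum]
  refine Finset.sum_congr rfl fun l _ => ?_
  rw [sub_eq_add_neg, fourier_add]
  ring

theorem norm_symbolMap_le (n : ℕ) (T : Matrix (Fin n) (Fin n) ℂ) (x : AddCircle (2 * Real.pi)) :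
    ‖symbolMap n T x‖ ≤ l2OpNorm T := by
  rw [symbolMap_eq_inner, norm_mul]
  calc ‖1 / (n : ℂ)‖ * ‖inner ℂ (fourierVec n x) (Matrix.toEuclideanCLM (𝕜 := ℂ) T (fourierVec n x))‖
      ≤ ‖1 / (n : ℂ)‖ * (l2OpNorm T * ‖fourierVec n x‖ ^ 2) := by
        gcongr
        exact ContinuousLinearMap.norm_inner_apply_self_le _ _
    _ = n / n * l2OpNorm T := by
        rw [norm_fourierVec_sq]
        simp only [norm_div, norm_one, Complex.norm_natCast]
        ring
    _ ≤ l2OpNorm T := mul_le_of_le_one_left (norm_nonneg _) (div_self_le_one _)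

theorem iSup_norm_symbolMap_le (n : ℕ) (T : Matrix (Fin n) (Fin n) ℂ) :
    (⨆ x : AddCircle (2 * Real.pi), ‖symbolMap n T x‖) ≤ l2OpNorm T :=
  ciSup_le (norm_symbolMap_le n T)

theorem symbolMap_norm_le_general (n : ℕ) (T : Matrix (Fin n) (Fin n) ℂ) :
    ((⨆ x : AddCircle (2 * Real.pi), ‖symbolMap n T x‖) ≤ l2OpNorm T) ∧
    ((⨆ x : AddCircle (2 * Real.pi),
        ‖(1 / (n : ℂ)) * ∑ j : Fin n, ∑ l : Fin n,
            (((((j : ℕ) : ℤ) - ((l : ℕ) : ℤ)) : ℤ) : ℂ) * T j l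
              * fourier (((j : ℕ) : ℤ) - ((l : ℕ) : ℤ)) x‖)
      ≤ l2OpNorm (deltaMat n T)) := by
  refine ⟨iSup_norm_symbolMap_le n T, ?_⟩
  simpa only [symbolMap, deltaMat, Matrix.of_apply] using iSup_norm_symbolMap_le n (deltaMat n T)

/-- Lemma 3.4 (matrix form): `sup_x |S_n(T)(x)| ≤ ‖T‖` and the derivative of `S_n(T)`,
`(1/n) Σ_{j,l} i(j−l) T_{jl} e^{i(j−l)x}`, has sup-norm at most `‖δ_n(T)‖`. -/
theorem symbolMap_norm_le (n : ℕ) (hn : 1 ≤ n) (T : Matrix (Fin n) (Fin n) ℂ) :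
    ((⨆ x : AddCircle (2 * Real.pi), ‖symbolMap n T x‖) ≤ l2OpNorm T) ∧
    ((⨆ x : AddCircle (2 * Real.pi),
        ‖(1 / (n : ℂ)) * ∑ j : Fin n, ∑ l : Fin n,
            (((((j : ℕ) : ℤ) - ((l : ℕ) : ℤ)) : ℤ) : ℂ) * T j l
              * fourier (((j : ℕ) : ℤ) - ((l : ℕ) : ℤ)) x‖)
      ≤ l2OpNorm (deltaMat n T)) :=
  symbolMap_norm_le_general n T
end

section
/- Let n ≥ 1 and let a_{−n+1}, …, a_{n−1} be complex numbers. Then sup_x | Σ_{k=−n+1}^{n−1} (|k|/n) · a_k · e^{ikx} | ≤ (√(2n−1)/n) · sup_x | Σ_{k=−n+1}^{n−1} k · a_k · e^{ikx} |, where the suprema are over x ∈ ℝ (equivalently over the circle AddCircle (2π)). In particular the constant γ′_n = √(2n−1)/n tends to 0 as n → ∞. -/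
/-!
Pointwise, `|Σ (|k|/n) a_k e^{ikx}| ≤ (1/n) Σ |k a_k|`. By Cauchy–Schwarz over the `2n − 1`
frequencies this `ℓ¹` norm of the coefficients of `[D, a] = Σ k a_k e^{ikx}` is at most `√(2n − 1)`
times their `ℓ²` norm, and by Bessel's inequality for the characters, orthonormal in `L²` of the
Haar probability measure on the circle, the `ℓ²` norm is at most the `L²` norm, hence the sup norm,
of `[D, a]`.
-/

open Filter MeasureTheory Real Complex

section Bessel

variable {T : ℝ} [Fact (0 < T)]

theorem sum_norm_sq_le_norm_sum_smul_fourier_sq (s : Finset ℤ) (c : ℤ → ℂ) :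
    ∑ k ∈ s, ‖c k‖ ^ 2 ≤ ‖∑ k ∈ s, c k • fourier (T := T) k‖ ^ 2 := by
  set F := ∑ k ∈ s, c k • fourier (T := T) k
  let toL2 := ContinuousMap.toLp (E := ℂ) 2 (AddCircle.haarAddCircle (T := T)) ℂ
  have hF : toL2 F = ∑ k ∈ s, c k • fourierLp 2 k := by
    simp only [F, map_sum, map_smul]; rfl
  have hbessel : ∑ k ∈ s, ‖c k‖ ^ 2 ≤ ‖toL2 F‖ ^ 2 := by
    refine le_of_eq_of_le (Finset.sum_congr rfl fun k hk => ?_)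
      (orthonormal_fourier.sum_inner_products_le (toL2 F) (s := s))
    rw [hF, orthonormal_fourier.inner_right_sum c hk]
  have htoL2 : ‖toL2 F‖ ≤ ‖F‖ := by
    refine (toL2.le_opNorm F).trans (mul_le_of_le_one_left (norm_nonneg _) ?_)
    refine (ContinuousMap.toLp_norm_le _).trans ?_
    simp [measureUnivNNReal]
  exact hbessel.trans (by gcongr)

end Bessel

theorem norm_exp_intCast_mul_ofReal_mul_I (k : ℤ) (x : ℝ) :
    ‖exp (k * x * I)‖ = 1 := by
  exact_mod_cast norm_exp_ofReal_mul_I (k * x)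

theorem sum_smul_fourier_coe_apply (s : Finset ℤ) (c : ℤ → ℂ) (x : ℝ) :
    (∑ k ∈ s, c k • fourier (T := 2 * π) k) x = ∑ k ∈ s, c k * exp (k * x * I) := by
  simp only [ContinuousMap.coe_sum, ContinuousMap.coe_smul, Finset.sum_apply, Pi.smul_apply,
    smul_eq_mul, fourier_coe_apply]
  congr! 3
  field_simp
  push_cast
  ring

theorem sum_norm_sq_le_iSup_norm_sum_sq (s : Finset ℤ) (c : ℤ → ℂ) :
    ∑ k ∈ s, ‖c k‖ ^ 2 ≤ (⨆ x : ℝ, ‖∑ k ∈ s, c k * exp (k * x * I)‖) ^ 2 := by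
  have : Fact (0 < 2 * π) := ⟨two_pi_pos⟩
  convert sum_norm_sq_le_norm_sum_smul_fourier_sq (T := 2 * π) s c using 2
  rw [ContinuousMap.norm_eq_iSup_norm, ← QuotientAddGroup.mk_surjective.iSup_comp]
  simp only [sum_smul_fourier_coe_apply]

theorem sum_norm_le_sqrt_card_mul_iSup_norm_sum (s : Finset ℤ) (c : ℤ → ℂ) :
    ∑ k ∈ s, ‖c k‖ ≤ √(s.card : ℝ) * ⨆ x : ℝ, ‖∑ k ∈ s, c k * exp (k * x * I)‖ := by
  have hM : 0 ≤ ⨆ x : ℝ, ‖∑ k ∈ s, c k * exp (k * x * I)‖ :=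
    Real.iSup_nonneg fun _ => norm_nonneg _
  calc ∑ k ∈ s, ‖c k‖ = ∑ k ∈ s, 1 * ‖c k‖ := by simp
    _ ≤ √(∑ k ∈ s, 1 ^ 2) * √(∑ k ∈ s, ‖c k‖ ^ 2) := Real.sum_mul_le_sqrt_mul_sqrt _ _ _
    _ ≤ √(s.card : ℝ) * ⨆ x : ℝ, ‖∑ k ∈ s, c k * exp (k * x * I)‖ := by
      simp only [one_pow, Finset.sum_const, nsmul_eq_mul, mul_one]
      gcongr
      exact Real.sqrt_le_iff.mpr ⟨hM, sum_norm_sq_le_iSup_norm_sum_sq s c⟩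

theorem tendsto_sqrt_two_mul_sub_one_div_atTop :
    Tendsto (fun m : ℕ => √(2 * (m : ℝ) - 1) / m) atTop (nhds 0) := by
  refine squeeze_zero (fun m => by positivity) (fun m => ?_)
    (by simpa only [Real.sqrt_zero] using (tendsto_const_div_atTop_nhds_zero_nat 2).sqrt)
  rcases Nat.eq_zero_or_pos m with rfl | hm
  · simp
  have hm' : (0 : ℝ) < m := by exact_mod_cast hm
  calc √(2 * (m : ℝ) - 1) / m ≤ √(2 * m) / √(m ^ 2) := by
        rw [Real.sqrt_sq hm'.le]; gcongr; linarith
    _ = √(2 / m) := by rw [← Real.sqrt_div' _ (by positivity)]; field_simp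

/-- The unnumbered Lemma of Section 3.2: for a trigonometric polynomial with coefficients
`a_{−n+1}, …, a_{n−1}`,
`sup_x |Σ_k (|k|/n) a_k e^{ikx}| ≤ (√(2n−1)/n) · sup_x |Σ_k k a_k e^{ikx}|`,
and the constant `γ′_n = √(2n−1)/n` tends to `0`. -/
theorem fejerRiesz_estimate (n : ℕ) (hn : 1 ≤ n) (a : ℤ → ℂ) :
    ((⨆ x : ℝ, ‖∑ k ∈ Finset.Icc (-(n : ℤ) + 1) ((n : ℤ) - 1),
          ((|k| : ℤ) : ℂ) / (n : ℂ) * a k * Complex.exp ((k : ℂ) * (x : ℂ) * Complex.I)‖)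
      ≤ (Real.sqrt (2 * (n : ℝ) - 1) / (n : ℝ)) *
        ⨆ x : ℝ, ‖∑ k ∈ Finset.Icc (-(n : ℤ) + 1) ((n : ℤ) - 1),
            (k : ℂ) * a k * Complex.exp ((k : ℂ) * (x : ℂ) * Complex.I)‖) ∧
    Tendsto (fun m : ℕ => Real.sqrt (2 * (m : ℝ) - 1) / (m : ℝ)) atTop (nhds 0) := by
  refine ⟨?_, tendsto_sqrt_two_mul_sub_one_div_atTop⟩
  set s := Finset.Icc (-(n : ℤ) + 1) ((n : ℤ) - 1)
  have hcard : (s.card : ℝ) = 2 * n - 1 := by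
    have : (s.card : ℤ) = 2 * n - 1 := by simp only [s, Int.card_Icc]; omega
    exact_mod_cast this
  have hcoeff := sum_norm_le_sqrt_card_mul_iSup_norm_sum s (fun k => k * a k)
  rw [hcard] at hcoeff
  refine ciSup_le fun x => ?_
  calc _ ≤ ∑ k ∈ s, ‖(k : ℂ) * a k‖ / n := (norm_sum_le _ _).trans_eq <|
        Finset.sum_congr rfl fun k _ => by
          simp [norm_exp_intCast_mul_ofReal_mul_I, mul_div_right_comm]
    _ = (∑ k ∈ s, ‖(k : ℂ) * a k‖) / n := (Finset.sum_div _ _ _).symm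
    _ ≤ _ := by rw [div_mul_eq_mul_div]; gcongr
end
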